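/- Let H be a Hopf algebra and a, b, c ∈ H grouplike elements satisfying ab = cba, ac = ca, bc = cb. Then ∂²(a ⊗ b) = 1 ⊗ c ⊗ c ⊗ 1, where for F ∈ H⊗H, ∂F = (1⊗F)(id⊗Δ)(F)(Δ⊗id)(F⁻¹)(F⁻¹⊗1), and ∂ of a 3-cochain is as defined by ∂Φ = Φ₂₃₄ Φ_{1(23)4} Φ₁₂₃ (Φ⁻¹)_{(12)34} (Φ⁻¹)_{12(34)}. In particular ∂(a⊗b) need not be a 3-cocycle. -/

import Mathlib

/-!
Every leg of the coboundaries of `a ⊗ b` is an elementary tensor of grouplike units, so both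
coboundaries are computed leg by leg in the group `Hˣ`: `∂(x ⊗ y) = x⁻¹ ⊗ ⁅x, y⁆ ⊗ y`, and
`∂(x ⊗ y ⊗ z) = 1 ⊗ ⁅x, y²⁆ y ⊗ y ⁅y, z⁆ ⊗ 1`. Here `⁅a, b⁆ = c`, so `∂(a ⊗ b) = a⁻¹ ⊗ c ⊗ b`,
and since `c` commutes with `a` and `b` both commutators in the second formula vanish.
-/

open TensorProduct

section

variable (k H : Type*) [Field k] [Ring H] [HopfAlgebra k H]

/-- The coboundary of a 2-cochain `F ∈ H ⊗ H` with (two-sided) inverse `Finv`: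
`∂F = (1 ⊗ F)·(id ⊗ Δ)(F)·(Δ ⊗ id)(F⁻¹)·(F⁻¹ ⊗ 1) ∈ H^{⊗3}`. -/
noncomputable def del2 (F Finv : H ⊗[k] H) : H ⊗[k] (H ⊗[k] H) :=
  ((1 : H) ⊗ₜ[k] F) *
    (TensorProduct.map LinearMap.id (Coalgebra.comul (R := k)) F) *
    ((TensorProduct.assoc k H H H)
      (TensorProduct.map (Coalgebra.comul (R := k)) LinearMap.id Finv)) *
    ((TensorProduct.assoc k H H H) (Finv ⊗ₜ[k] (1 : H)))

/-- The coboundary of a 3-cochain `Φ ∈ H^{⊗3}` with (two-sided) inverse `Φinv`,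
in leg notation: `∂Φ = Φ₂₃₄ · Φ_{1(23)4} · Φ₁₂₃ · (Φ⁻¹)_{(12)34} · (Φ⁻¹)_{12(34)}`. -/
noncomputable def del3 (Φ Φinv : H ⊗[k] (H ⊗[k] H)) : H ⊗[k] (H ⊗[k] (H ⊗[k] H)) :=
  ((1 : H) ⊗ₜ[k] Φ) *
    (TensorProduct.map LinearMap.id
      ((TensorProduct.assoc k H H H).toLinearMap ∘ₗ
        TensorProduct.map (Coalgebra.comul (R := k)) LinearMap.id) Φ) *
    (TensorProduct.map LinearMap.id
      (TensorProduct.map LinearMap.id ((TensorProduct.mk k H H).flip (1 : H))) Φ) *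
    ((TensorProduct.assoc k H H (H ⊗[k] H))
      (TensorProduct.map (Coalgebra.comul (R := k)) LinearMap.id Φinv)) *
    (TensorProduct.map LinearMap.id
      (TensorProduct.map LinearMap.id (Coalgebra.comul (R := k))) Φinv)

section

variable {k H}

open scoped commutatorElement

lemma comul_units_inv {u : Hˣ} (hu : Coalgebra.comul (R := k) (u : H) = (u : H) ⊗ₜ[k] (u : H)) :
    Coalgebra.comul (R := k) ((u⁻¹ : Hˣ) : H) = ((u⁻¹ : Hˣ) : H) ⊗ₜ[k] ((u⁻¹ : Hˣ) : H) := by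
  refine left_inv_eq_right_inv (a := Coalgebra.comul (R := k) (u : H)) ?_ ?_
  · rw [← Bialgebra.comul_mul, Units.inv_mul, Bialgebra.comul_one]
  · rw [hu, Algebra.TensorProduct.tmul_mul_tmul, Units.mul_inv, Algebra.TensorProduct.one_def]

lemma tmul_tmul_units_mul_inv (x y z : Hˣ) :
    ((x : H) ⊗ₜ[k] ((y : H) ⊗ₜ[k] (z : H))) *
      (((x⁻¹ : Hˣ) : H) ⊗ₜ[k] (((y⁻¹ : Hˣ) : H) ⊗ₜ[k] ((z⁻¹ : Hˣ) : H))) = 1 := by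
  simp [Algebra.TensorProduct.tmul_mul_tmul, Algebra.TensorProduct.one_def]

lemma del2_tmul_units {x y : Hˣ}
    (hx : Coalgebra.comul (R := k) (x : H) = (x : H) ⊗ₜ[k] (x : H))
    (hy : Coalgebra.comul (R := k) (y : H) = (y : H) ⊗ₜ[k] (y : H)) :
    del2 k H ((x : H) ⊗ₜ[k] (y : H)) (((x⁻¹ : Hˣ) : H) ⊗ₜ[k] ((y⁻¹ : Hˣ) : H)) =
      ((x⁻¹ : Hˣ) : H) ⊗ₜ[k] (((⁅x, y⁆ : Hˣ) : H) ⊗ₜ[k] (y : H)) := by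
  simp only [del2, map_tmul, assoc_tmul, LinearMap.id_coe, id_eq, hy, comul_units_inv hx,
    Algebra.TensorProduct.tmul_mul_tmul]
  simp [commutatorElement_def, mul_assoc]

lemma del3_tmul_units {x y z : Hˣ}
    (hx : Coalgebra.comul (R := k) (x : H) = (x : H) ⊗ₜ[k] (x : H))
    (hy : Coalgebra.comul (R := k) (y : H) = (y : H) ⊗ₜ[k] (y : H))
    (hz : Coalgebra.comul (R := k) (z : H) = (z : H) ⊗ₜ[k] (z : H)) :
    del3 k H ((x : H) ⊗ₜ[k] ((y : H) ⊗ₜ[k] (z : H)))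
        (((x⁻¹ : Hˣ) : H) ⊗ₜ[k] (((y⁻¹ : Hˣ) : H) ⊗ₜ[k] ((z⁻¹ : Hˣ) : H))) =
      (1 : H) ⊗ₜ[k] (((⁅x, y ^ 2⁆ * y : Hˣ) : H) ⊗ₜ[k] (((y * ⁅y, z⁆ : Hˣ) : H) ⊗ₜ[k] (1 : H))) := by
  simp only [del3, map_tmul, assoc_tmul, LinearMap.id_coe, id_eq, LinearMap.coe_comp,
    Function.comp_apply, LinearEquiv.coe_coe, mk_apply, LinearMap.flip_apply, hy,
    comul_units_inv hx, comul_units_inv hz, Algebra.TensorProduct.tmul_mul_tmul]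
  simp [commutatorElement_def, pow_two, mul_assoc]

end

theorem del_squared_grouplike (a b c : Hˣ)
    (ha : Coalgebra.comul (R := k) (a : H) = (a : H) ⊗ₜ[k] (a : H))
    (hb : Coalgebra.comul (R := k) (b : H) = (b : H) ⊗ₜ[k] (b : H))
    (hc : Coalgebra.comul (R := k) (c : H) = (c : H) ⊗ₜ[k] (c : H))
    (hab : (a : H) * b = (c : H) * b * a)
    (hac : (a : H) * c = (c : H) * a)
    (hbc : (b : H) * c = (c : H) * b) :
    ∀ Φinv : H ⊗[k] (H ⊗[k] H),
      del2 k H ((a : H) ⊗ₜ[k] (b : H)) (((a⁻¹ : Hˣ) : H) ⊗ₜ[k] ((b⁻¹ : Hˣ) : H)) * Φinv = 1 →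
      Φinv * del2 k H ((a : H) ⊗ₜ[k] (b : H)) (((a⁻¹ : Hˣ) : H) ⊗ₜ[k] ((b⁻¹ : Hˣ) : H)) = 1 →
        del3 k H (del2 k H ((a : H) ⊗ₜ[k] (b : H))
            (((a⁻¹ : Hˣ) : H) ⊗ₜ[k] ((b⁻¹ : Hˣ) : H))) Φinv =
          (1 : H) ⊗ₜ[k] ((c : H) ⊗ₜ[k] ((c : H) ⊗ₜ[k] (1 : H))) := by
  open scoped commutatorElement in
  intro Φinv _ hΦinv_mul
  have hcomm_ab : ⁅a, b⁆ = c := by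
    rw [commutatorElement_def, show a * b = c * b * a from Units.ext hab]
    group
  have hΦ : del2 k H ((a : H) ⊗ₜ[k] (b : H)) (((a⁻¹ : Hˣ) : H) ⊗ₜ[k] ((b⁻¹ : Hˣ) : H)) =
      ((a⁻¹ : Hˣ) : H) ⊗ₜ[k] ((c : H) ⊗ₜ[k] (b : H)) := by
    rw [del2_tmul_units ha hb, hcomm_ab]
  have hΦinv : Φinv = ((a⁻¹⁻¹ : Hˣ) : H) ⊗ₜ[k] (((c⁻¹ : Hˣ) : H) ⊗ₜ[k] ((b⁻¹ : Hˣ) : H)) :=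
    left_inv_eq_right_inv (hΦ ▸ hΦinv_mul) (tmul_tmul_units_mul_inv _ _ _)
  have hcomm_ac : ⁅a⁻¹, c ^ 2⁆ = 1 :=
    commutatorElement_eq_one_iff_commute.mpr ((Commute.inv_left (Units.ext hac)).pow_right 2)
  have hcomm_cb : ⁅c, b⁆ = 1 := commutatorElement_eq_one_iff_commute.mpr (Units.ext hbc).symm
  rw [hΦ, hΦinv, del3_tmul_units (comul_units_inv ha) hc hb, hcomm_ac, hcomm_cb, one_mul, mul_one]

end
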